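/- Let K : ℝ → ℝ be a Lipschitz continuous function supported on [−1,1] with Lipschitz constant L. Let n ∈ ℕ, b ∈ (0,1) with nb ≥ 1, and u ∈ [b, 1−b]. Then |(1/(nb)) ∑_{i=1}^n K²((i/n − u)/b) − ∫_{−1}^{1} K²(t) dt| ≤ C/(nb), where C is a constant depending only on L and sup|K|. -/

import Mathlib

set_option maxHeartbeats 1000000


open intervalIntegral

/-- For a Lipschitz kernel `K` supported on `[−1,1]` with Lipschitz constant `L` and `|K| ≤ S`,
there is a constant `C` depending only on `L` and `S` such that for all `n`, `b ∈ (0,1)` with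
`nb ≥ 1` and `u ∈ [b, 1−b]`:
`|(1/(nb)) ∑_{i=1}^n K²((i/n − u)/b) − ∫_{−1}^1 K²(t) dt| ≤ C/(nb)`. -/
theorem stmt10 (L S : ℝ) (hL : 0 ≤ L) (hS : 0 ≤ S) :
    ∃ C : ℝ, ∀ K : ℝ → ℝ, LipschitzWith (Real.toNNReal L) K →
      (∀ x : ℝ, 1 < |x| → K x = 0) → (∀ x : ℝ, |K x| ≤ S) →
      ∀ (n : ℕ) (b : ℝ), 0 < b → b < 1 → 1 ≤ (n : ℝ) * b →
        ∀ u ∈ Set.Icc b (1 - b),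
          |(1 / ((n : ℝ) * b)) * ∑ i ∈ Finset.Icc 1 n, K (((i : ℝ) / n - u) / b) ^ 2 -
              ∫ t in (-1 : ℝ)..1, K t ^ 2| ≤ C / ((n : ℝ) * b) := by
  classical
  refine ⟨8 * L * S, ?_⟩
  intro K hK hK0 hKS n b hb hb1 hnb u hu
  obtain ⟨hub, hu1⟩ := hu
  -- basic positivity
  have hn0 : n ≠ 0 := by
    rintro rfl; simp at hnb; linarith
  have hnR : (0 : ℝ) < n := by
    exact_mod_cast Nat.pos_of_ne_zero hn0
  have hnbpos : (0 : ℝ) < (n : ℝ) * b := by positivity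
  -- K vanishes for 1 ≤ |x|
  have hK1 : ∀ x : ℝ, 1 ≤ |x| → K x = 0 := by
    intro x hx
    rcases eq_or_lt_of_le hx with h | h
    · have key : ∀ ε : ℝ, 0 < ε → |K x| ≤ (L + 1) * ε := by
        intro ε hε
        have hKy : K (x * (1 + ε)) = 0 := by
          apply hK0
          rw [abs_mul, ← h, abs_of_pos (by linarith)]
          linarith
        have hd := hK.dist_le_mul x (x * (1 + ε))
        rw [Real.coe_toNNReal L hL, Real.dist_eq, Real.dist_eq, hKy, sub_zero] at hd
        have hxe : |x - x * (1 + ε)| = ε := by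
          have : x - x * (1 + ε) = -(x * ε) := by ring
          rw [this, abs_neg, abs_mul, ← h, abs_of_pos hε]; ring
        rw [hxe] at hd
        nlinarith
      by_contra hne
      have hpos : 0 < |K x| := abs_pos.mpr hne
      have hL1 : (0 : ℝ) < L + 1 := by linarith
      have hkey := key (|K x| / (2 * (L + 1))) (by positivity)
      have heq2 : (L + 1) * (|K x| / (2 * (L + 1))) = |K x| / 2 := by
        field_simp
      rw [heq2] at hkey
      linarith
    · exact hK0 x h
  set f : ℝ → ℝ := fun t => K t ^ 2 with hfdef
  have hf0 : ∀ x : ℝ, 1 ≤ |x| → f x = 0 := by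
    intro x hx; simp [hfdef, hK1 x hx]
  have hflip : ∀ x y : ℝ, |f x - f y| ≤ 2 * L * S * |x - y| := by
    intro x y
    have h1 : f x - f y = (K x + K y) * (K x - K y) := by simp [hfdef]; ring
    have h2 : |K x + K y| ≤ 2 * S := by
      have := abs_add_le (K x) (K y)
      have := hKS x; have := hKS y; linarith [abs_add_le (K x) (K y)]
    have h3 : |K x - K y| ≤ L * |x - y| := by
      have hd := hK.dist_le_mul x y
      rwa [Real.coe_toNNReal L hL, Real.dist_eq, Real.dist_eq] at hd
    calc |f x - f y| = |K x + K y| * |K x - K y| := by rw [h1, abs_mul]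
      _ ≤ (2 * S) * (L * |x - y|) := by
          apply mul_le_mul h2 h3 (abs_nonneg _) (by linarith)
      _ = 2 * L * S * |x - y| := by ring
  have hfc : Continuous f := (hK.continuous).pow 2
  set g : ℝ → ℝ := fun x => f ((x - u) / b) with hgdef
  have hgc : Continuous g := hfc.comp (by fun_prop)
  have hfint : ∀ a c : ℝ, IntervalIntegrable f MeasureTheory.volume a c :=
    fun a c => hfc.intervalIntegrable a c
  have hgint : ∀ a c : ℝ, IntervalIntegrable g MeasureTheory.volume a c :=
    fun a c => hgc.intervalIntegrable a c
  -- g vanishes left of u - b and right of u + b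
  have hgle : ∀ x : ℝ, x ≤ u - b → g x = 0 := by
    intro x hx
    apply hf0
    have h1 : (x - u) / b ≤ -1 := by
      rw [div_le_iff₀ hb]; linarith
    rw [le_abs]
    right
    linarith
  have hgge : ∀ x : ℝ, u + b ≤ x → g x = 0 := by
    intro x hx
    apply hf0
    rw [le_abs]
    left
    rw [le_div_iff₀ hb]
    linarith
  -- change of variables: ∫ g over [0,1] = b * ∫ f over [-1,1]
  have e1 : (∫ x in (0:ℝ)..1, g x)
      = b • ∫ t in ((0:ℝ)/b - u/b)..((1:ℝ)/b - u/b), f t := by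
    have hgx : ∀ x : ℝ, g x = f (x / b - u / b) := by
      intro x; rw [hgdef]; simp only [sub_div]
    simp only [hgx]
    exact integral_comp_div_sub f hb.ne' (u / b)
  have hA : (0:ℝ)/b - u/b ≤ -1 := by
    rw [zero_div, zero_sub, neg_le_neg_iff, le_div_iff₀ hb]
    linarith
  have hB : (1:ℝ) ≤ (1:ℝ)/b - u/b := by
    rw [div_sub_div_same, le_div_iff₀ hb]
    linarith
  have z1 : (∫ t in ((0:ℝ)/b - u/b)..(-1:ℝ), f t) = 0 := by
    rw [intervalIntegral.integral_congr (g := fun _ => (0:ℝ)) ?_,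
      intervalIntegral.integral_const]
    · simp
    · intro t ht
      rw [Set.uIcc_of_le hA] at ht
      exact hf0 t (le_abs.mpr (Or.inr (by linarith [ht.2])))
  have z2 : (∫ t in (1:ℝ)..((1:ℝ)/b - u/b), f t) = 0 := by
    rw [intervalIntegral.integral_congr (g := fun _ => (0:ℝ)) ?_,
      intervalIntegral.integral_const]
    · simp
    · intro t ht
      rw [Set.uIcc_of_le hB] at ht
      exact hf0 t (le_abs.mpr (Or.inl ht.1))
  have etotal : (∫ x in (0:ℝ)..1, g x) = b * ∫ t in (-1:ℝ)..1, f t := by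
    have h1 := intervalIntegral.integral_add_adjacent_intervals
      (hfint ((0:ℝ)/b - u/b) (-1)) (hfint (-1) ((1:ℝ)/b - u/b))
    have h2 := intervalIntegral.integral_add_adjacent_intervals
      (hfint (-1) 1) (hfint 1 ((1:ℝ)/b - u/b))
    rw [e1, smul_eq_mul, ← h1, z1, zero_add, ← h2, z2, add_zero]
  -- partition of [0,1]
  have hsum : (∑ i ∈ Finset.range n, ∫ x in ((i:ℝ)/n)..(((i:ℝ)+1)/n), g x)
      = ∫ x in (0:ℝ)..1, g x := by
    have h := intervalIntegral.sum_integral_adjacent_intervals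
      (a := fun i : ℕ => (i : ℝ) / n) (n := n)
      (fun k _ => hgint _ _)
    beta_reduce at h
    push_cast at h
    rw [zero_div, div_self hnR.ne'] at h
    exact h
  -- rewrite the target sum
  have hT : (∑ i ∈ Finset.Icc 1 n, K (((i : ℝ) / n - u) / b) ^ 2)
      = ∑ i ∈ Finset.range n, g (((i:ℝ) + 1)/n) := by
    rw [← Finset.Ico_add_one_right_eq_Icc, Finset.sum_Ico_eq_sum_range]
    simp only [Nat.add_sub_cancel, Nat.succ_sub_one]
    apply Finset.sum_congr rfl
    intro i _
    push_cast
    rw [hgdef, hfdef]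
    ring_nf
  -- the error terms
  set E : ℕ → ℝ := fun i =>
    ∫ x in ((i:ℝ)/n)..(((i:ℝ)+1)/n), (g (((i:ℝ)+1)/n) - g x) with hEdef
  have hEi : ∀ i : ℕ, E i = g (((i:ℝ)+1)/n) * (1/n)
      - ∫ x in ((i:ℝ)/n)..(((i:ℝ)+1)/n), g x := by
    intro i
    simp only [hEdef]
    rw [intervalIntegral.integral_sub (intervalIntegrable_const) (hgint _ _),
      intervalIntegral.integral_const, smul_eq_mul]
    congr 1
    have hd : ((i:ℝ)+1)/n - (i:ℝ)/n = 1/n := by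
      rw [div_sub_div_same]; ring_nf
    rw [hd, mul_comm]
  have key : (1 / ((n:ℝ) * b)) * (∑ i ∈ Finset.Icc 1 n, K (((i : ℝ) / n - u) / b) ^ 2)
      - (∫ t in (-1:ℝ)..1, f t) = (1/b) * ∑ i ∈ Finset.range n, E i := by
    have hsumE : (∑ i ∈ Finset.range n, E i)
        = (∑ i ∈ Finset.range n, g (((i:ℝ) + 1)/n)) * (1/n)
          - ∫ x in (0:ℝ)..1, g x := by
      rw [← hsum, Finset.sum_mul, ← Finset.sum_sub_distrib]
      exact Finset.sum_congr rfl fun i _ => hEi i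
    rw [hT, hsumE, etotal]
    field_simp
  -- per-term bound
  have hbnd : ∀ i : ℕ, |E i| ≤ 2 * L * S / b * (1/n) * (1/n) := by
    intro i
    have hle : (i:ℝ)/n ≤ ((i:ℝ)+1)/n := by
      gcongr
      linarith
    have := intervalIntegral.norm_integral_le_of_norm_le_const
      (C := 2 * L * S / b * (1/n))
      (f := fun x => g (((i:ℝ)+1)/n) - g x)
      (a := (i:ℝ)/n) (b := ((i:ℝ)+1)/n) ?_
    · rw [Real.norm_eq_abs] at this
      have habs : |((i:ℝ)+1)/n - (i:ℝ)/n| = 1/n := by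
        have hd : ((i:ℝ)+1)/n - (i:ℝ)/n = 1/n := by
          rw [div_sub_div_same]; ring_nf
        rw [hd, abs_of_nonneg (by positivity)]
      calc |E i| ≤ 2 * L * S / b * (1/n) * |((i:ℝ)+1)/n - (i:ℝ)/n| := this
        _ = 2 * L * S / b * (1/n) * (1/n) := by rw [habs]
    · intro x hx
      rw [Set.uIoc_of_le hle] at hx
      rw [Real.norm_eq_abs, hgdef]
      calc |f ((((i:ℝ)+1)/n - u)/b) - f ((x - u)/b)|
          ≤ 2 * L * S * |(((i:ℝ)+1)/n - u)/b - (x - u)/b| := hflip _ _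
        _ ≤ 2 * L * S / b * (1/n) := by
            have heq : (((i:ℝ)+1)/n - u)/b - (x - u)/b = (((i:ℝ)+1)/n - x)/b := by
              ring
            rw [heq, abs_div, abs_of_pos hb]
            have hd : ((i:ℝ)+1)/n - (i:ℝ)/n = 1/n := by
              rw [div_sub_div_same]; ring_nf
            have h1 : |((i:ℝ)+1)/n - x| ≤ 1/n := by
              rw [abs_le]
              have hx1 : (i:ℝ)/n < x := hx.1
              have hx2 : x ≤ ((i:ℝ)+1)/n := hx.2
              have hpos : (0:ℝ) ≤ 1/n := by positivity
              constructor <;> linarith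
            have hLS : (0:ℝ) ≤ 2 * L * S := by positivity
            calc 2 * L * S * (|((i:ℝ)+1)/n - x| / b)
                ≤ 2 * L * S * ((1/(n:ℝ)) / b) := by
                  apply mul_le_mul_of_nonneg_left _ hLS
                  gcongr
              _ = 2 * L * S / b * (1/n) := by ring
  -- vanishing of E outside the support window
  have hE0 : ∀ i : ℕ, (((i:ℝ)+1)/n ≤ u - b ∨ u + b ≤ (i:ℝ)/n) → E i = 0 := by
    intro i hi
    have hle : (i:ℝ)/n ≤ ((i:ℝ)+1)/n := by
      gcongr
      linarith
    simp only [hEdef]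
    rw [intervalIntegral.integral_congr (g := fun _ => (0:ℝ)) ?_]
    · simp
    · intro x hx
      rw [Set.uIcc_of_le hle] at hx
      rcases hi with h | h
      · have hg1 : g (((i:ℝ)+1)/n) = 0 := hgle _ h
        have hg2 : g x = 0 := hgle _ (le_trans hx.2 h)
        simp [hg1, hg2]
      · have hg1 : g (((i:ℝ)+1)/n) = 0 := hgge _ (le_trans h hle)
        have hg2 : g x = 0 := hgge _ (le_trans h hx.1)
        simp [hg1, hg2]
  -- counting the bad indices
  set P : ℕ → Prop := fun i => u - b < ((i:ℝ)+1)/n ∧ (i:ℝ)/n < u + b with hPdef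
  have hPsub : (Finset.range n).filter P ⊆
      Finset.Ico ⌊(n:ℝ) * (u - b)⌋₊ ⌈(n:ℝ) * (u + b)⌉₊ := by
    intro i hi
    rw [Finset.mem_filter] at hi
    obtain ⟨_, h1, h2⟩ := hi
    rw [Finset.mem_Ico]
    constructor
    · have : (n:ℝ) * (u - b) < (i:ℝ) + 1 := by
        rw [div_lt_iff₀ hnR] at h2
        have := (lt_div_iff₀ hnR).mp h1
        linarith [(lt_div_iff₀ hnR).mp h1]
      have hfl : (⌊(n:ℝ) * (u - b)⌋₊ : ℝ) ≤ (n:ℝ) * (u - b) :=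
        Nat.floor_le (by nlinarith)
      have : (⌊(n:ℝ) * (u - b)⌋₊ : ℝ) < (i:ℝ) + 1 := lt_of_le_of_lt hfl this
      exact_mod_cast Nat.lt_succ_iff.mp (by exact_mod_cast this)
    · have h2' : (i:ℝ) < (n:ℝ) * (u + b) := by
        rw [div_lt_iff₀ hnR] at h2; linarith
      have hce : (n:ℝ) * (u + b) ≤ (⌈(n:ℝ) * (u + b)⌉₊ : ℝ) := Nat.le_ceil _
      exact_mod_cast lt_of_lt_of_le h2' hce
  have hcard : ((((Finset.range n).filter P).card : ℝ))
      ≤ 2 * (n:ℝ) * b + 2 := by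
    have h1 : ((Finset.range n).filter P).card ≤
        (Finset.Ico ⌊(n:ℝ) * (u - b)⌋₊ ⌈(n:ℝ) * (u + b)⌉₊).card :=
      Finset.card_le_card hPsub
    rw [Nat.card_Ico] at h1
    set m := ⌊(n:ℝ) * (u - b)⌋₊
    set M := ⌈(n:ℝ) * (u + b)⌉₊
    have hub0 : (0:ℝ) ≤ (n:ℝ) * (u - b) := by nlinarith
    have hMle : (M : ℝ) < (n:ℝ) * (u + b) + 1 := Nat.ceil_lt_add_one (by nlinarith)
    have hmge : (n:ℝ) * (u - b) - 1 < (m : ℝ) := Nat.sub_one_lt_floor _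
    have h2 : ((M - m : ℕ) : ℝ) ≤ 2 * (n:ℝ) * b + 2 := by
      rcases le_total M m with h | h
      · rw [Nat.sub_eq_zero_of_le h]
        have : (0:ℝ) ≤ (n:ℝ) * b := by positivity
        simp; nlinarith
      · rw [Nat.cast_sub h]
        nlinarith
    calc ((((Finset.range n).filter P).card : ℝ)) ≤ ((M - m : ℕ) : ℝ) := by
          exact_mod_cast h1
      _ ≤ 2 * (n:ℝ) * b + 2 := h2
  -- sum bound
  have hbnd0 : (0:ℝ) ≤ 2 * L * S / b * (1/n) * (1/n) := by positivity
  have hsumbound : (∑ i ∈ Finset.range n, |E i|)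
      ≤ (2 * (n:ℝ) * b + 2) * (2 * L * S / b * (1/n) * (1/n)) := by
    have hstep1 : (∑ i ∈ Finset.range n, |E i|)
        = ∑ i ∈ (Finset.range n).filter P, |E i| := by
      symm
      apply Finset.sum_subset (Finset.filter_subset _ _)
      intro i hi hni
      rw [Finset.mem_filter] at hni
      have hnP : ¬ P i := fun hP => hni ⟨hi, hP⟩
      simp only [hPdef] at hnP
      push_neg at hnP
      rcases le_or_gt (((i:ℝ)+1)/n) (u - b) with h | h
      · rw [hE0 i (Or.inl h), abs_zero]
      · rw [hE0 i (Or.inr (hnP h)), abs_zero]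
    rw [hstep1]
    calc (∑ i ∈ (Finset.range n).filter P, |E i|)
        ≤ ((Finset.range n).filter P).card • (2 * L * S / b * (1/n) * (1/n)) :=
          Finset.sum_le_card_nsmul _ _ _ (fun i _ => hbnd i)
      _ = (((Finset.range n).filter P).card : ℝ) * (2 * L * S / b * (1/n) * (1/n)) := by
          rw [nsmul_eq_mul]
      _ ≤ (2 * (n:ℝ) * b + 2) * (2 * L * S / b * (1/n) * (1/n)) :=
          mul_le_mul_of_nonneg_right hcard hbnd0
  -- final assembly
  rw [key]
  rw [abs_mul, abs_of_pos (by positivity : (0:ℝ) < 1/b)]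
  have habs : |∑ i ∈ Finset.range n, E i| ≤ ∑ i ∈ Finset.range n, |E i| :=
    Finset.abs_sum_le_sum_abs _ _
  have h2nb : 2 * (n:ℝ) * b + 2 ≤ 4 * ((n:ℝ) * b) := by nlinarith
  have hfin : (1/b) * |∑ i ∈ Finset.range n, E i|
      ≤ (1/b) * ((4 * ((n:ℝ) * b)) * (2 * L * S / b * (1/n) * (1/n))) := by
    apply mul_le_mul_of_nonneg_left _ (by positivity : (0:ℝ) ≤ 1/b)
    calc |∑ i ∈ Finset.range n, E i| ≤ ∑ i ∈ Finset.range n, |E i| := habs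
      _ ≤ (2 * (n:ℝ) * b + 2) * (2 * L * S / b * (1/n) * (1/n)) := hsumbound
      _ ≤ (4 * ((n:ℝ) * b)) * (2 * L * S / b * (1/n) * (1/n)) :=
          mul_le_mul_of_nonneg_right h2nb hbnd0
  calc (1/b) * |∑ i ∈ Finset.range n, E i|
      ≤ (1/b) * ((4 * ((n:ℝ) * b)) * (2 * L * S / b * (1/n) * (1/n))) := hfin
    _ = 8 * L * S / ((n:ℝ) * b) := by field_simp; ring
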